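/- Define g(t) = (2/e) · (e^{-2t}(t+1) + t - 1)/t for t > 0. Then for every real κ > 0 and β > 1 with t₀ := κ/(β+1) ∈ (0,1), one has ∫₀¹ t^β (1-t) e^{κ t} dt > (e^{κ}/κ²) · g(t₀). -/

import Mathlib

/-!
Tangent-line bounds for `exp` and `log` give `e t^β ≥ (β+1)t - (β-1)` for all `t > 0`. The right
side is nonnegative exactly on `[(β-1)/(β+1), 1]`; discarding the (positive) integral over
`[0, (β-1)/(β+1)]` and integrating the quadratic-times-exponential bound on the rest in closed form
gives `e · (e^κ/κ²) g(κ/(β+1))`.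
-/

noncomputable def g (t : ℝ) : ℝ :=
  (2 / Real.exp 1) * (Real.exp (-2 * t) * (t + 1) + t - 1) / t

open Real intervalIntegral

/-- `e t^{β-1} = exp (1 + (β-1) log t) ≥ 2 + (β-1) log t ≥ 2 + (β-1)(1 - 1/t)`. -/
lemma add_one_mul_sub_le_exp_one_mul_rpow {β t : ℝ} (hβ : 1 ≤ β) (ht : 0 < t) :
    (β + 1) * t - (β - 1) ≤ exp 1 * t ^ β := by
  have hexp : 2 + (β - 1) * log t ≤ exp 1 * t ^ (β - 1) := by
    rw [rpow_def_of_pos ht, ← exp_add]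
    linarith [add_one_le_exp (1 + log t * (β - 1))]
  have hlog : (β - 1) * (1 - t⁻¹) ≤ (β - 1) * log t :=
    mul_le_mul_of_nonneg_left (one_sub_inv_le_log_of_pos ht) (by linarith)
  have hsplit : exp 1 * t ^ β = t * (exp 1 * t ^ (β - 1)) := by
    rw [rpow_sub_one ht.ne']
    field_simp
  calc (β + 1) * t - (β - 1) = t * (2 + (β - 1) * (1 - t⁻¹)) := by field_simp; ring
    _ ≤ t * (exp 1 * t ^ (β - 1)) := by gcongr; linarith
    _ = exp 1 * t ^ β := hsplit.symm

lemma hasDerivAt_exp_mul_mul_quadratic (κ A B C t : ℝ) :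
    HasDerivAt (fun t => exp (κ * t) * (A * t ^ 2 + B * t + C))
      (exp (κ * t) * (κ * A * t ^ 2 + (κ * B + 2 * A) * t + (κ * C + B))) t := by
  have hexp : HasDerivAt (fun t => exp (κ * t)) (exp (κ * t) * κ) t :=
    ((hasDerivAt_id t).const_mul κ).exp.congr_deriv (by simp)
  have hquad : HasDerivAt (fun t => A * t ^ 2 + B * t + C) (A * (2 * t) + B) t := by
    simpa using (((hasDerivAt_pow 2 t).const_mul A).add ((hasDerivAt_id t).const_mul B)).add_const C
  exact (hexp.mul hquad).congr_deriv (by ring)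

lemma integral_one_sub_mul_mul_exp (κ β : ℝ) (hκ : κ ≠ 0) (hβ : β + 1 ≠ 0) :
    ∫ t in (β - 1) / (β + 1)..1, (1 - t) * ((β + 1) * t - (β - 1)) * exp (κ * t) =
      exp 1 * (exp κ / κ ^ 2 * g (κ / (β + 1))) := by
  set A := -(β + 1) / κ
  set B := (2 * β - 2 * A) / κ
  set C := (-(β - 1) - B) / κ
  have hderiv (t : ℝ) : HasDerivAt (fun t => exp (κ * t) * (A * t ^ 2 + B * t + C))
      ((1 - t) * ((β + 1) * t - (β - 1)) * exp (κ * t)) t := by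
    convert hasDerivAt_exp_mul_mul_quadratic κ A B C t using 1
    simp only [A, B, C]
    field_simp
    ring
  have hexp : exp (κ * ((β - 1) / (β + 1))) = exp κ * exp (-2 * (κ / (β + 1))) := by
    rw [← exp_add]
    congr 1
    field_simp
    ring
  rw [integral_eq_sub_of_hasDerivAt (fun t _ => hderiv t)
    (Continuous.intervalIntegrable (by fun_prop) _ _), hexp]
  simp only [g, A, B, C]
  field_simp
  ring

lemma integral_one_sub_mul_mul_exp_lt {β a : ℝ} (κ : ℝ) (hβ : 1 ≤ β) (ha₀ : 0 < a) (ha₁ : a ≤ 1) :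
    ∫ t in a..1, (1 - t) * ((β + 1) * t - (β - 1)) * exp (κ * t) <
      exp 1 * ∫ t in (0 : ℝ)..1, t ^ β * (1 - t) * exp (κ * t) := by
  have hcont : Continuous fun t : ℝ => t ^ β * (1 - t) * exp (κ * t) := by
    have : Continuous fun t : ℝ => t ^ β := continuous_rpow_const (by linarith)
    fun_prop
  have hsplit := integral_add_adjacent_intervals
    (hcont.intervalIntegrable (μ := MeasureTheory.volume) 0 a) (hcont.intervalIntegrable a 1)
  have hpos : 0 < ∫ t in (0 : ℝ)..a, t ^ β * (1 - t) * exp (κ * t) := by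
    refine intervalIntegral_pos_of_pos_on (hcont.intervalIntegrable 0 a) (fun t ht => ?_) ha₀
    have : 0 < 1 - t := by linarith [ht.2]
    have : 0 < t ^ β := rpow_pos_of_pos ht.1 β
    positivity
  have hmono : ∫ t in a..1, (1 - t) * ((β + 1) * t - (β - 1)) * exp (κ * t) ≤
      ∫ t in a..1, exp 1 * (t ^ β * (1 - t) * exp (κ * t)) := by
    refine integral_mono_on ha₁ (Continuous.intervalIntegrable (by fun_prop) _ _)
      ((hcont.const_mul _).intervalIntegrable _ _) fun t ht => ?_
    have hkey := add_one_mul_sub_le_exp_one_mul_rpow hβ (ha₀.trans_le ht.1)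
    have : 0 ≤ (1 - t) * exp (κ * t) := mul_nonneg (by linarith [ht.2]) (exp_pos _).le
    nlinarith
  rw [integral_const_mul] at hmono
  rw [← hsplit, mul_add]
  linarith [mul_pos (exp_pos 1) hpos]

theorem stmt_5_general (κ β : ℝ) (hκ : 0 < κ) (hβ : 1 < β) :
    (∫ t in (0:ℝ)..1, t ^ β * (1 - t) * Real.exp (κ * t)) >
      (Real.exp κ / κ ^ 2) * g (κ / (β + 1)) := by
  have hβ₁ : 0 < β + 1 := by linarith
  have hlower := integral_one_sub_mul_mul_exp_lt (a := (β - 1) / (β + 1)) κ hβ.le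
    (div_pos (by linarith) hβ₁) ((div_le_one hβ₁).2 (by linarith))
  rw [integral_one_sub_mul_mul_exp κ β hκ.ne' hβ₁.ne'] at hlower
  exact lt_of_mul_lt_mul_left hlower (exp_pos 1).le

theorem stmt_5 (κ β : ℝ) (hκ : 0 < κ) (hβ : 1 < β)
    (ht₀ : κ / (β + 1) ∈ Set.Ioo (0 : ℝ) 1) :
    (∫ t in (0:ℝ)..1, t ^ β * (1 - t) * Real.exp (κ * t)) >
      (Real.exp κ / κ ^ 2) * g (κ / (β + 1)) :=
  stmt_5_general κ β hκ hβ
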